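/- (Exponential 2-state UPG correctness.) Work with probability vectors on 2 states {0,1}; let h = ½·δ_0 + ½·δ_1. For bits r_0, r_1, …, r_n ∈ {0,1} define D_n(r_0; r_n, …, r_1) recursively: D_0(r_0) = δ_{1−r_0}; for n ≥ 1, setting b = max(r_0, r_n): if b = 1 then D_n(r_0; r_n, …, r_1) = δ_0 ⊕ (h ∗ D_{n−1}(r_0; r_{n−1}, …, r_1)), and if b = 0 then D_n(r_0; r_n, …, r_1) = D_{n−1}(r_0; r_{n−1}, …, r_1) ⊕ (h ∗ δ_1). Then for all n ≥ 0 and all bits r_0, …, r_n satisfying (r_0 = 1 → r_i = 0 for all 1 ≤ i ≤ n), the vector D_n(r_0; r_n, …, r_1) assigns probability (r_0·2^n + ∑_{i=1}^{n} r_i·2^{i−1}) / 2^n to state 0 (and the complementary probability to state 1). -/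

import Mathlib

noncomputable section

/-- Series composition: distribution of `min` of two independent states. -/
def smin {N : ℕ} (p q : Fin N → ℝ) : Fin N → ℝ :=
  fun k => ∑ i, ∑ j, if min i j = k then p i * q j else 0

/-- Parallel composition: distribution of `max` of two independent states. -/
def smax {N : ℕ} (p q : Fin N → ℝ) : Fin N → ℝ :=
  fun k => ∑ i, ∑ j, if max i j = k then p i * q j else 0

/-- The point mass at state `s`. -/
def delta {N : ℕ} (s : Fin N) : Fin N → ℝ := fun i => if i = s then 1 else 0

/-- The fair 2-state pswitch `h = ½·δ₀ + ½·δ₁`. -/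
def hB : Fin 2 → ℝ := fun i => (1 / 2) * delta (0 : Fin 2) i + (1 / 2) * delta (1 : Fin 2) i

/-- The exponential 2-state UPG `D_n(r₀; r_n, …, r₁)`:
`D₀(r₀) = δ_{1-r₀}`; for `n ≥ 1`, with `b = max(r₀, r_n)`,
`D_n = δ₀ ⊕ (h ∗ D_{n-1})` if `b = 1` and `D_n = D_{n-1} ⊕ (h ∗ δ₁)` if `b = 0`. -/
def D (r : ℕ → Fin 2) : ℕ → (Fin 2 → ℝ)
  | 0 => delta (1 - r 0)
  | n + 1 =>
    if max (r 0) (r (n + 1)) = 1 then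
      smax (delta (0 : Fin 2)) (smin hB (D r n))
    else
      smax (D r n) (smin hB (delta (1 : Fin 2)))

/-!
Series and parallel composition multiply total masses, so every `D_n` is a probability vector. On two
states `max i j = 0` forces `i = j = 0` and `min i j = 1` forces `i = j = 1`; hence one step of the
recursion acts on the state-0 probability `x` of `D_n` by `x ↦ (x + b) / 2` with `b = max(r₀, r_{n+1})`,
i.e. it prepends `b` as the leading binary digit of `x`. The hypothesis on the bits makes
`max(r₀, r_{n+1}) = r₀ + r_{n+1}`, exactly the digit that turns the numerator `r₀·2ⁿ + ∑ r_i 2^{i-1}`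
into the next one.
-/

section Composition

variable {N : ℕ}

theorem sum_smin (p q : Fin N → ℝ) : ∑ k, smin p q k = (∑ i, p i) * ∑ j, q j := by
  simp only [smin, Finset.sum_mul_sum]
  rw [Finset.sum_comm]
  refine Finset.sum_congr rfl fun i _ => ?_
  rw [Finset.sum_comm]
  simp

theorem sum_smax (p q : Fin N → ℝ) : ∑ k, smax p q k = (∑ i, p i) * ∑ j, q j := by
  simp only [smax, Finset.sum_mul_sum]
  rw [Finset.sum_comm]
  refine Finset.sum_congr rfl fun i _ => ?_
  rw [Finset.sum_comm]
  simp

theorem smax_apply_zero (p q : Fin (N + 1) → ℝ) : smax p q 0 = p 0 * q 0 := by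
  simp [smax, ← bot_eq_zero, ite_and]

theorem smin_apply_last (p q : Fin (N + 1) → ℝ) :
    smin p q (Fin.last N) = p (Fin.last N) * q (Fin.last N) := by
  simp [smin, ← Fin.top_eq_last, ite_and]

end Composition

section TwoStates

variable (p q : Fin 2 → ℝ)

theorem smin_apply_zero_add_apply_one : smin p q 0 + smin p q 1 = (p 0 + p 1) * (q 0 + q 1) := by
  simpa only [Fin.sum_univ_two] using sum_smin p q

theorem smax_apply_zero_add_apply_one : smax p q 0 + smax p q 1 = (p 0 + p 1) * (q 0 + q 1) := by
  simpa only [Fin.sum_univ_two] using sum_smax p q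

theorem smin_apply_zero_of_two : smin p q 0 = (p 0 + p 1) * (q 0 + q 1) - p 1 * q 1 := by
  have hlast : smin p q 1 = p 1 * q 1 := smin_apply_last (N := 1) p q
  linarith [smin_apply_zero_add_apply_one p q]

end TwoStates

theorem delta_apply_zero_add_apply_one (s : Fin 2) : delta s 0 + delta s 1 = 1 := by
  fin_cases s <;> simp [delta]

theorem hB_apply_zero_add_apply_one : hB 0 + hB 1 = 1 := by
  norm_num [hB, delta]

theorem D_apply_zero_add_apply_one (r : ℕ → Fin 2) (n : ℕ) : D r n 0 + D r n 1 = 1 := by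
  induction n with
  | zero => exact delta_apply_zero_add_apply_one _
  | succ n ih =>
    simp only [D]
    split_ifs <;>
      simp only [smax_apply_zero_add_apply_one, smin_apply_zero_add_apply_one, ih,
        delta_apply_zero_add_apply_one, hB_apply_zero_add_apply_one, one_mul]

theorem D_zero_apply_zero (r : ℕ → Fin 2) : D r 0 0 = ((r 0 : ℕ) : ℝ) := by
  simp only [D, delta]
  generalize r 0 = a
  fin_cases a <;> simp

theorem D_succ_apply_zero (r : ℕ → Fin 2) (n : ℕ) :
    D r (n + 1) 0 = (D r n 0 + ((max (r 0) (r (n + 1)) : Fin 2) : ℕ)) / 2 := by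
  have h1 : D r n 1 = 1 - D r n 0 := by linarith [D_apply_zero_add_apply_one r n]
  simp only [D]
  split_ifs with hb
  · simp only [smax_apply_zero, smin_apply_zero_of_two, hb]
    norm_num [delta, hB, h1]
    ring
  · have hb : max (r 0) (r (n + 1)) = 0 := by omega
    simp only [smax_apply_zero, smin_apply_zero_of_two, hb]
    norm_num [delta, hB]
    ring

theorem Fin.val_max_eq_add_of_imp {a b : Fin 2} (h : a = 1 → b = 0) :
    ((max a b : Fin 2) : ℕ) = a + b := by
  revert a b
  decide

/-- Exponential 2-state UPG correctness: with input bits `r₀, …, r_n` (where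
`r₀ = 1` forces all other bits to `0`), `D_n` assigns probability
`(r₀·2ⁿ + ∑_{i=1}^n r_i·2^{i-1})/2ⁿ` to state `0` and the complementary
probability to state `1`. -/
theorem upg2_exponential (n : ℕ) (r : ℕ → Fin 2)
    (hr : r 0 = 1 → ∀ i, 1 ≤ i → i ≤ n → r i = 0) :
    D r n 0 =
      (((r 0 : ℕ) : ℝ) * 2 ^ n + ∑ i ∈ Finset.Icc 1 n, ((r i : ℕ) : ℝ) * 2 ^ (i - 1)) / 2 ^ n ∧
    D r n 1 = 1 - D r n 0 := by
  refine ⟨?_, by linarith [D_apply_zero_add_apply_one r n]⟩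
  induction n with
  | zero => simp [D_zero_apply_zero]
  | succ n ih =>
    have hdigit := Fin.val_max_eq_add_of_imp fun h => hr h (n + 1) (by omega) le_rfl
    rw [D_succ_apply_zero, ih fun h i h1 h2 => hr h i h1 (by omega), hdigit,
      Finset.sum_Icc_succ_top (by omega)]
    push_cast
    field_simp
    ring
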